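/- Let K be a field, α, λ ∈ K∖{0} and μ ∈ K. Then the quartic polynomial G_α = λ²·z·(αz−x)³ + α²·x·y²·(μ·(αz−x) − α·λ·y) is irreducible as an element of K̄[x,y,z], where K̄ is an algebraic closure of K. -/

import Mathlib

/-!
Variables `x, y, z` are `X 0, X 1, X 2`. The substitution `x ↦ θx`, `z ↦ x + z` turns `θz − x`
into `θz`, so `G_θ` becomes linear in `x`:
`G_θ = A(y, z)·x + λ²θ³z⁴` with `A = λ²θ³z³ + θ⁴μy²z − θ⁴λy³`.
A polynomial of degree one over the factorial ring `F[y, z]` is irreducible as soon as its two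
coefficients are coprime. The only prime factor of `λ²θ³z⁴` is `z`, and `z ∤ A` because
`A(1, 0) = −θ⁴λ ≠ 0`. This works over every field `F`, in particular over `K̄`.
-/

open MvPolynomial

noncomputable section

def Gq (K : Type) [Field K] (t l m : K) : MvPolynomial (Fin 3) K :=
  C (l ^ 2) * X 2 * (C t * X 2 - X 0) ^ 3 +
    C (t ^ 2) * X 0 * (X 1) ^ 2 * (C m * (C t * X 2 - X 0) - C (t * l) * X 1)

def shear {R : Type*} [CommRing R] (u : Rˣ) :
    MvPolynomial (Fin 3) R ≃ₐ[R] MvPolynomial (Fin 3) R :=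
  AlgEquiv.ofAlgHom (aeval ![C (u : R) * X 0, X 1, X 0 + X 2])
    (aeval ![C (↑u⁻¹ : R) * X 0, X 1, X 2 - C (↑u⁻¹ : R) * X 0])
    (algHom_ext fun i => by fin_cases i <;> simp [← mul_assoc, ← C_mul])
    (algHom_ext fun i => by fin_cases i <;> simp [← mul_assoc, ← C_mul])

section

variable {F : Type} [Field F]

/-- The coefficient `A(y, z)` of `x` in `shear θ (G_θ)`, with `y, z` renumbered as `X 0, X 1`. -/
def shearedGqCoeffX (a l m : F) : MvPolynomial (Fin 2) F :=
  C (l ^ 2 * a ^ 3) * X 1 ^ 3 + C (a ^ 4 * m) * X 0 ^ 2 * X 1 - C (a ^ 4 * l) * X 0 ^ 3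

def shearedGqCoeffOne (a l : F) : MvPolynomial (Fin 2) F :=
  C (l ^ 2 * a ^ 3) * X 1 ^ 4

lemma finSuccEquiv_shear_Gq {a : F} (ha : a ≠ 0) (l m : F) :
    finSuccEquiv F 2 (shear (Units.mk0 a ha) (Gq F a l m)) =
      Polynomial.C (shearedGqCoeffX a l m) * Polynomial.X +
        Polynomial.C (shearedGqCoeffOne a l) := by
  have hX1 : (X 1 : MvPolynomial (Fin 3) F) = X (Fin.succ 0) := rfl
  have hX2 : (X 2 : MvPolynomial (Fin 3) F) = X (Fin.succ 1) := rfl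
  simp only [Gq, shearedGqCoeffX, shearedGqCoeffOne, shear, AlgEquiv.ofAlgHom_apply,
    Units.val_mk0, map_add, map_mul, map_sub, map_pow, aeval_X, aeval_C, algebraMap_eq,
    Matrix.cons_val_zero, Matrix.cons_val_one, Matrix.cons_val_two, Matrix.head_cons,
    Matrix.tail_cons]
  simp only [hX1, hX2, finSuccEquiv_X_zero, finSuccEquiv_X_succ, ← algebraMap_eq,
    AlgEquiv.commutes, Polynomial.algebraMap_apply]
  simp only [algebraMap_eq]
  ring

lemma X_one_not_dvd_shearedGqCoeffX {a l : F} (ha : a ≠ 0) (hl : l ≠ 0) (m : F) :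
    ¬ X 1 ∣ shearedGqCoeffX a l m := fun hdvd => by
  simpa [shearedGqCoeffX, ha, hl] using map_dvd (eval ![1, 0]) hdvd

lemma isRelPrime_shearedGqCoeff {a l : F} (ha : a ≠ 0) (hl : l ≠ 0) (m : F) :
    IsRelPrime (shearedGqCoeffX a l m) (shearedGqCoeffOne a l) := by
  have hunit : IsUnit (C (l ^ 2 * a ^ 3) : MvPolynomial (Fin 2) F) :=
    (Ne.isUnit (by positivity)).map C
  rw [shearedGqCoeffOne, isRelPrime_mul_unit_left_right hunit, isRelPrime_comm]
  exact (X_prime.irreducible.isRelPrime_iff_not_dvd.mpr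
    (X_one_not_dvd_shearedGqCoeffX ha hl m)).pow_left

theorem Gq_irreducible {a l : F} (ha : a ≠ 0) (hl : l ≠ 0) (m : F) :
    Irreducible (Gq F a l m) := by
  have hA : shearedGqCoeffX a l m ≠ 0 := fun h0 =>
    X_one_not_dvd_shearedGqCoeffX ha hl m (h0 ▸ dvd_zero _)
  rw [← MulEquiv.irreducible_iff ((shear (Units.mk0 a ha)).trans (finSuccEquiv F 2)),
    AlgEquiv.trans_apply, finSuccEquiv_shear_Gq]
  exact Polynomial.irreducible_C_mul_X_add_C hA (isRelPrime_shearedGqCoeff ha hl m)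

end

lemma map_Gq {K L : Type} [Field K] [Field L] (f : K →+* L) (t l m : K) :
    MvPolynomial.map f (Gq K t l m) = Gq L (f t) (f l) (f m) := by
  simp [Gq]

theorem statement8 (K : Type) [Field K] (a l : K) (ha : a ≠ 0) (hl : l ≠ 0) (m : K) :
    Irreducible (MvPolynomial.map (algebraMap K (AlgebraicClosure K)) (Gq K a l m)) := by
  rw [map_Gq]
  exact Gq_irreducible ((map_ne_zero _).mpr ha) ((map_ne_zero _).mpr hl) _

end
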